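/- Let K be an algebraically closed field of characteristic zero, let p1, p2, p3, p4 ∈ K[t1,t2] with p4 ≠ 0, and let s1, s2, s3 ∈ K[t1,t2] with s3 ≠ 0. Set P_a := (p1/p4, p2/p4, p3/p4) and S_a := (s1/s3, s2/s3). Assume that the field extension K(t1,t2)/K(s1/s3, s2/s3) is finite and that the field extension K(t1,t2)/K(p1/p4, p2/p4, p3/p4) is finite, and assume F_g(P_a) = F_g(S_a). Then for each j ∈ {1,2,3}, the rational function p_j/p_4 belongs to the subfield of K(t1,t2) generated over K by s1/s3 and s2/s3. -/

import Mathlib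

open MvPolynomial IntermediateField

set_option maxHeartbeats 1000000
set_option synthInstance.maxHeartbeats 1000000
set_option linter.unusedSectionVars false
set_option linter.unusedVariables false


noncomputable section

/-- The rational function field `L = K(t1,t2)`. -/
abbrev Lfield (K : Type*) [Field K] : Type _ := FractionRing (MvPolynomial (Fin 2) K)

/-- A fixed algebraic closure `\bar{L}` of `L = K(t1,t2)`. -/
abbrev BarL (K : Type*) [Field K] : Type _ := AlgebraicClosure (Lfield K)

variable {K : Type*} [Field K] [IsAlgClosed K] [CharZero K]

/-- Evaluation of a polynomial of `K[t1,t2]` at a point `α ∈ \bar{L}²`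
(via the canonical embedding of `K` into `\bar{L}`). -/
def ev (α : Fin 2 → BarL K) (f : MvPolynomial (Fin 2) K) : BarL K :=
  MvPolynomial.aeval α f

/-- The generic point `(h1, h2) ∈ \bar{L}²`: the images of the two variables. -/
def hpt (K : Type*) [Field K] : Fin 2 → BarL K := fun i =>
  algebraMap (MvPolynomial (Fin 2) K) (BarL K) (MvPolynomial.X i)

/-- The canonical map `K[t1,t2] → K(t1,t2)`. -/
def toL (K : Type*) [Field K] : MvPolynomial (Fin 2) K →+* Lfield K :=
  algebraMap _ _

/-- The generic fiber of one rational function `f ∈ K(t1,t2)`, viewed as a component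
of an affine rational map: a point `α ∈ \bar{L}²` belongs to it when, writing `f = P/Q`
in reduced form (`Q ≠ 0`, `gcd(P,Q) = 1`), one has `Q(α) ≠ 0` and
`P(α)·Q(h1,h2) = P(h1,h2)·Q(α)`. -/
def FgOne (f : Lfield K) : Set (Fin 2 → BarL K) :=
  {α | ∀ P Q : MvPolynomial (Fin 2) K, Q ≠ 0 → (∀ d, d ∣ P → d ∣ Q → IsUnit d) →
      toL K P = f * toL K Q →
      (ev α Q ≠ 0 ∧ ev α P * ev (hpt K) Q = ev (hpt K) P * ev α Q)}

/-- The generic fiber `F_g(P_a)` of `P_a = (p1/p4, p2/p4, p3/p4)`. -/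
def FgP (p1 p2 p3 p4 : MvPolynomial (Fin 2) K) : Set (Fin 2 → BarL K) :=
  FgOne (toL K p1 / toL K p4) ∩ FgOne (toL K p2 / toL K p4) ∩ FgOne (toL K p3 / toL K p4)

/-- The generic fiber `F_g(S_a)` of `S_a = (s1/s3, s2/s3)`. -/
def FgS (s1 s2 s3 : MvPolynomial (Fin 2) K) : Set (Fin 2 → BarL K) :=
  FgOne (toL K s1 / toL K s3) ∩ FgOne (toL K s2 / toL K s3)

-- ### Auxiliary lemmas


lemma toL_injective : Function.Injective (toL K) :=
  IsFractionRing.injective (MvPolynomial (Fin 2) K) (Lfield K)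

lemma toL_ne_zero {Q : MvPolynomial (Fin 2) K} (hQ : Q ≠ 0) : toL K Q ≠ 0 := by
  intro h
  exact hQ (toL_injective (by simpa using h))

/-- Evaluation at the point determined by an embedding `σ`. -/
lemma ev_sigma (F : IntermediateField K (Lfield K)) (σ : Lfield K →ₐ[F] BarL K)
    (Q : MvPolynomial (Fin 2) K) :
    ev (fun i => σ (toL K (X i))) Q = σ (toL K Q) := by
  have h := MvPolynomial.aeval_unique
    ((σ.restrictScalars K).comp (IsScalarTower.toAlgHom K (MvPolynomial (Fin 2) K) (Lfield K)))
  have := congrFun (congrArg (DFunLike.coe) h) Q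
  simpa [ev, toL, Function.comp_def] using this.symm

lemma ev_hpt (Q : MvPolynomial (Fin 2) K) :
    ev (hpt K) Q = algebraMap (Lfield K) (BarL K) (toL K Q) := by
  have h := MvPolynomial.aeval_unique
    (IsScalarTower.toAlgHom K (MvPolynomial (Fin 2) K) (BarL K))
  have := congrFun (congrArg (DFunLike.coe) h) Q
  rw [show ev (hpt K) Q = MvPolynomial.aeval (hpt K) Q from rfl,
    show (toL K : _ →+* _) = algebraMap _ _ from rfl, ← IsScalarTower.algebraMap_apply]
  simp only [Function.comp_def] at this
  exact this.symm

lemma sigma_fix (F : IntermediateField K (Lfield K)) (σ : Lfield K →ₐ[F] BarL K)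
    {f : Lfield K} (hf : f ∈ F) :
    σ f = algebraMap (Lfield K) (BarL K) f := by
  lift f to F using hf with y
  rw [show (y : Lfield K) = algebraMap F (Lfield K) y from rfl, σ.commutes,
    ← IsScalarTower.algebraMap_apply]

lemma sigma_injective (F : IntermediateField K (Lfield K)) (σ : Lfield K →ₐ[F] BarL K) :
    Function.Injective σ :=
  σ.toRingHom.injective

/-- The point associated to `σ` lies in the generic fiber of any `f` fixed by `σ`. -/
lemma mem_FgOne_of_fix (F : IntermediateField K (Lfield K)) (σ : Lfield K →ₐ[F] BarL K)
    {f : Lfield K} (hσf : σ f = algebraMap (Lfield K) (BarL K) f) :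
    (fun i => σ (toL K (X i))) ∈ FgOne f := by
  intro P Q hQ _ hPQ
  have hQL : toL K Q ≠ 0 := toL_ne_zero hQ
  refine ⟨?_, ?_⟩
  · rw [ev_sigma]
    intro h
    exact hQL (sigma_injective F σ (by simpa using h))
  · rw [ev_sigma, ev_sigma, ev_hpt, ev_hpt, hPQ, map_mul, map_mul, hσf]
    ring

/-- Conversely, if the point of `σ` lies in the generic fiber of `toL a / toL b`,
then `σ` fixes `toL a / toL b`. -/
lemma fix_of_mem_FgOne (F : IntermediateField K (Lfield K)) (σ : Lfield K →ₐ[F] BarL K)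
    {a b : MvPolynomial (Fin 2) K} (hb : b ≠ 0)
    (hα : (fun i => σ (toL K (X i))) ∈ FgOne (toL K a / toL K b)) :
    σ (toL K a / toL K b) = algebraMap (Lfield K) (BarL K) (toL K a / toL K b) := by
  obtain ⟨P, Q, g, hcop, hP, hQ⟩ :=
    UniqueFactorizationMonoid.exists_reduced_factors' a b hb
  have hg : g ≠ 0 := fun h => hb (by rw [← hQ, h, zero_mul])
  have hQ0 : Q ≠ 0 := fun h => hb (by rw [← hQ, h, mul_zero])
  have hbL : toL K b ≠ 0 := toL_ne_zero hb
  have hQL : toL K Q ≠ 0 := toL_ne_zero hQ0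
  have hfrac : toL K a / toL K b = toL K P / toL K Q := by
    rw [div_eq_div_iff hbL hQL, ← map_mul, ← map_mul]
    congr 1
    rw [← hP, ← hQ]; ring
  have hPQ : toL K P = (toL K a / toL K b) * toL K Q := by
    rw [hfrac, div_mul_cancel₀ _ hQL]
  obtain ⟨hne, heq⟩ := hα P Q hQ0 hcop hPQ
  rw [ev_sigma, ev_sigma, ev_hpt, ev_hpt] at heq
  rw [ev_sigma] at hne
  have hιQ : algebraMap (Lfield K) (BarL K) (toL K Q) ≠ 0 := by
    simpa using hQL
  rw [hfrac, map_div₀, map_div₀, div_eq_div_iff hne hιQ]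
  linear_combination heq

/-- Key field-theoretic fact: an element of `L` fixed by all `F`-embeddings of `L`
into `\bar L` lies in `F`, when `L/F` is finite (hence separable, char zero). -/
lemma mem_of_fixed (F : IntermediateField K (Lfield K)) [FiniteDimensional F (Lfield K)]
    (x : Lfield K)
    (hx : ∀ σ : Lfield K →ₐ[F] BarL K, σ x = algebraMap (Lfield K) (BarL K) x) :
    x ∈ F := by
  haveI : Algebra.IsAlgebraic F (Lfield K) := Algebra.IsAlgebraic.of_finite _ _
  haveI : CharZero F := (algebraMap F (Lfield K)).charZero
  haveI : Algebra.IsSeparable F (Lfield K) := inferInstance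
  have hint : IsIntegral F x := IsIntegral.of_finite F x
  by_contra hxF
  have hxF' : x ∉ (algebraMap F (Lfield K)).range := by
    rintro ⟨y, rfl⟩; exact hxF y.2
  have hdeg : 2 ≤ (minpoly F x).natDegree := (minpoly.two_le_natDegree_iff hint).2 hxF'
  set p := minpoly F x with hp
  have hsep : p.Separable := Algebra.IsSeparable.isSeparable F x
  -- every root of p in BarL equals the image of x
  have hroot : ∀ y ∈ (p.map (algebraMap F (BarL K))).roots,
      y = algebraMap (Lfield K) (BarL K) x := by
    intro y hy
    have hy' : y ∈ p.aroots (BarL K) := hy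
    let σ₀ : F⟮x⟯ →ₐ[F] BarL K :=
      (IntermediateField.algHomAdjoinIntegralEquiv F hint).symm ⟨y, hy'⟩
    obtain ⟨σ, hσ⟩ := IsAlgClosed.surjective_restrictDomain_of_isAlgebraic
      (K := F) (L := F⟮x⟯) (E := Lfield K) (M := BarL K) σ₀
    have h1 : σ.restrictDomain F⟮x⟯ (AdjoinSimple.gen F x) = σ₀ (AdjoinSimple.gen F x) := by
      exact congrFun (congrArg DFunLike.coe hσ) _
    have h2 : σ.restrictDomain F⟮x⟯ (AdjoinSimple.gen F x)
        = σ ((AdjoinSimple.gen F x : F⟮x⟯) : Lfield K) := rfl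
    have hgen : σ ((AdjoinSimple.gen F x : F⟮x⟯) : Lfield K) = y := by
      rw [← h2, h1]
      exact IntermediateField.algHomAdjoinIntegralEquiv_symm_apply_gen F hint ⟨y, hy'⟩
    have hxy : σ x = y := hgen
    rw [← hxy, hx σ]
  -- roots are distinct and there are natDegree-many of them
  have hmapsep : (p.map (algebraMap F (BarL K))).Separable := hsep.map
  have hnodup : (p.map (algebraMap F (BarL K))).roots.Nodup := Polynomial.nodup_roots hmapsep
  have hp0 : p ≠ 0 := minpoly.ne_zero hint
  have hsplit : Polynomial.Splits (p.map (algebraMap F (BarL K))) :=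
    IsAlgClosed.splits _
  have hcard : (p.map (algebraMap F (BarL K))).roots.card = p.natDegree := by
    rw [Polynomial.splits_iff_card_roots.1 hsplit, Polynomial.natDegree_map]
  have hsub : (p.map (algebraMap F (BarL K))).roots ⊆ {algebraMap (Lfield K) (BarL K) x} := by
    intro y hy
    rw [Multiset.mem_singleton]
    exact hroot y hy
  have hle : (p.map (algebraMap F (BarL K))).roots ≤ {algebraMap (Lfield K) (BarL K) x} :=
    (Multiset.le_iff_subset hnodup).2 hsub
  have : (p.map (algebraMap F (BarL K))).roots.card ≤ 1 := by
    simpa using Multiset.card_le_card hle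
  omega

/-- Assume `K(t1,t2)/K(s1/s3, s2/s3)` and
`K(t1,t2)/K(p1/p4, p2/p4, p3/p4)` are finite field extensions and that
`F_g(P_a) = F_g(S_a)`. Then for each `j ∈ {1,2,3}`, the rational function `p_j/p_4`
belongs to the subfield of `K(t1,t2)` generated over `K` by `s1/s3` and `s2/s3`. -/
theorem statement4 (p1 p2 p3 p4 s1 s2 s3 : MvPolynomial (Fin 2) K)
    (hp4 : p4 ≠ 0) (hs3 : s3 ≠ 0)
    (hSfin : FiniteDimensional
      (IntermediateField.adjoin K
        ({toL K s1 / toL K s3, toL K s2 / toL K s3} : Set (Lfield K))) (Lfield K))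
    (hPfin : FiniteDimensional
      (IntermediateField.adjoin K
        ({toL K p1 / toL K p4, toL K p2 / toL K p4, toL K p3 / toL K p4} : Set (Lfield K)))
      (Lfield K))
    (hfib : FgP p1 p2 p3 p4 = FgS s1 s2 s3) :
    toL K p1 / toL K p4 ∈
        IntermediateField.adjoin K
          ({toL K s1 / toL K s3, toL K s2 / toL K s3} : Set (Lfield K)) ∧
      toL K p2 / toL K p4 ∈
        IntermediateField.adjoin K
          ({toL K s1 / toL K s3, toL K s2 / toL K s3} : Set (Lfield K)) ∧
      toL K p3 / toL K p4 ∈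
        IntermediateField.adjoin K
          ({toL K s1 / toL K s3, toL K s2 / toL K s3} : Set (Lfield K)) := by
  set F : IntermediateField K (Lfield K) :=
    IntermediateField.adjoin K ({toL K s1 / toL K s3, toL K s2 / toL K s3} : Set (Lfield K))
    with hF
  haveI : FiniteDimensional F (Lfield K) := hSfin
  -- the point of any σ lies in FgS
  have hptS : ∀ σ : Lfield K →ₐ[F] BarL K, (fun i => σ (toL K (X i))) ∈ FgS s1 s2 s3 := by
    intro σ
    constructor
    · exact mem_FgOne_of_fix F σ (sigma_fix F σ
        (IntermediateField.subset_adjoin K _ (Set.mem_insert _ _)))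
    · exact mem_FgOne_of_fix F σ (sigma_fix F σ
        (IntermediateField.subset_adjoin K _ (Set.mem_insert_of_mem _ rfl)))
  have main : ∀ a : MvPolynomial (Fin 2) K,
      FgS s1 s2 s3 ⊆ FgOne (toL K a / toL K p4) → toL K a / toL K p4 ∈ F := by
    intro a hsub
    apply mem_of_fixed F
    intro σ
    exact fix_of_mem_FgOne F σ hp4 (hsub (hptS σ))
  refine ⟨main p1 ?_, main p2 ?_, main p3 ?_⟩
  · rw [← hfib]; intro α hα; exact hα.1.1
  · rw [← hfib]; intro α hα; exact hα.1.2
  · rw [← hfib]; intro α hα; exact hα.2
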